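/- Let G be a group satisfying (H1) and (H2). Let H₁, H₂, K₁, K₂ ∈ L(G) with C_G(H₁) = C_G(H₂) and C_G(K₁) = C_G(K₂). Then C_G(H₁ ∩ K₁) = C_G(H₂ ∩ K₂). (That is, the equivalence relation H ~ K defined by C_G(H) = C_G(K) is compatible with the meet operation on L(G).) -/

import Mathlib

variable {G : Type*} [Group G]

/-- The conjugate `B ^ g = g⁻¹ * B * g` of a subgroup `B` by an element `g`. -/
def conjBy (B : Subgroup G) (g : G) : Subgroup G :=
  B.map (MulAut.conj g⁻¹).toMonoidHom

/-- A subgroup is virtually solvable if it has a solvable subgroup of finite index. -/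
def VirtSolvable (H : Subgroup G) : Prop :=
  ∃ M : Subgroup G, M ≤ H ∧ M.relIndex H ≠ 0 ∧ IsSolvable ↥M

/-- A subgroup is virtually nilpotent if it has a nilpotent subgroup of finite index. -/
def VirtNilpotent (H : Subgroup G) : Prop :=
  ∃ M : Subgroup G, M ≤ H ∧ M.relIndex H ≠ 0 ∧ Group.IsNilpotent ↥M

/-- Hypothesis (H1): every virtually solvable subgroup whose normalizer has finite index
(i.e. belonging to `L(G)`) is trivial. -/
def HypH1 (G : Type*) [Group G] : Prop :=
  ∀ H : Subgroup G, (Subgroup.normalizer (H : Set G)).FiniteIndex → VirtSolvable H → H = ⊥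

/-- Hypothesis (H2): every nontrivial normal subgroup of `G` contains the derived subgroup
of some finite-index subgroup of `G`. -/
def HypH2 (G : Type*) [Group G] : Prop :=
  ∀ N : Subgroup G, N.Normal → N ≠ ⊥ →
    ∃ G₀ : Subgroup G, G₀.FiniteIndex ∧ ⁅G₀, G₀⁆ ≤ N

/-- `VA K H` means `K ≤va H`: `K ≤ H` and `K` contains the derived subgroup of some
finite-index subgroup of `H`. -/
def VA (K H : Subgroup G) : Prop :=
  K ≤ H ∧ ∃ A : Subgroup G, A ≤ H ∧ A.relIndex H ≠ 0 ∧ ⁅A, A⁆ ≤ K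

/-- A subgroup `B` is basal if its normalizer has finite index and every conjugate of `B`
either equals `B` or meets `B` trivially. -/
def IsBasal (B : Subgroup G) : Prop :=
  (Subgroup.normalizer (B : Set G)).FiniteIndex ∧ ∀ g : G, conjBy B g = B ∨ conjBy B g ⊓ B = ⊥

/-- The rigid normalizer `R(A)` of a basal subgroup `A`: the intersection of the
normalizers of all basal subgroups meeting `A` trivially. -/
def rigidNormalizer (A : Subgroup G) : Subgroup G :=
  ⨅ B ∈ {B : Subgroup G | IsBasal B ∧ A ⊓ B = ⊥}, (Subgroup.normalizer (B : Set G))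

/-!
Fix a normal subgroup `Q` of finite index normalizing the subgroups in play. The `G`-conjugates
of the subgroups `A = X ⊓ Q` form a finite family, and the minimal nontrivial intersections of its
members ("meet atoms") are permuted by `G`, pairwise equal or commuting, and each one lies in or
centralizes each `A`. By (H1) a meet atom is not abelian, and by (H1) and (H2) a nontrivial normal
subgroup has trivial centralizer, so only `1` centralizes all meet atoms. Consequently, if `x`
centralizes the atoms below `A` and normalizes `A`, while `t` normalizes `A` and centralizes the
other atoms, then `⁅x, t⁆` centralizes every atom and `x` commutes with `t`.

This shows `C(X ⊓ Q) = C(X)`, and that `⁅Q', Q'⁆ ⊓ C(C(X)) ≤ X` for a suitable finite-index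
normal `Q'`. For the theorem, an atom below `H₂ ⊓ K₂ ⊓ Q` lies in `C(C(H₁)) ⊓ C(C(K₁))`, so its
commutators lie in `H₁ ⊓ K₁ ⊓ Q`; being non-abelian it lies below `H₁ ⊓ K₁ ⊓ Q`. Hence both meets
have the same atoms below them, and the commutation argument applies to `x ∈ C(H₁ ⊓ K₁)` and
`t ∈ H₂ ⊓ K₂`.
-/

open Subgroup Pointwise MulAction ConjAct
open scoped commutatorElement

theorem commute_of_inf_eq_bot {P R : Subgroup G} (hPR : P ≤ normalizer (R : Set G))
    (hRP : R ≤ normalizer (P : Set G)) (h : P ⊓ R = ⊥) {p r : G} (hp : p ∈ P) (hr : r ∈ R) :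
    Commute p r := by
  rw [← commutatorElement_eq_one_iff_commute, ← mem_bot, ← h, commutatorElement_def]
  refine mem_inf.mpr ⟨?_, mul_mem ((mem_normalizer_iff.mp (hPR hp) r).mp hr) (inv_mem hr)⟩
  rw [mul_assoc, mul_assoc, ← mul_assoc r]
  exact mul_mem hp ((mem_normalizer_iff.mp (hRP hr) _).mp (inv_mem hp))

theorem commute_commutatorElement_of_commute {x t p : G} (hp : Commute x p)
    (htp : Commute x (t⁻¹ * p * t)) : Commute ⁅x, t⁆ p := by
  rw [commutatorElement_def]
  calc x * t * x⁻¹ * t⁻¹ * p = x * t * (x⁻¹ * (t⁻¹ * p * t)) * t⁻¹ := by group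
    _ = x * t * ((t⁻¹ * p * t) * x⁻¹) * t⁻¹ := by rw [htp.inv_left.eq]
    _ = (x * p) * (t * x⁻¹ * t⁻¹) := by group
    _ = (p * x) * (t * x⁻¹ * t⁻¹) := by rw [hp.eq]
    _ = p * (x * t * x⁻¹ * t⁻¹) := by group

theorem commutatorElement_mem_inf {X Q : Subgroup G} [Q.Normal] (hQX : Q ≤ normalizer (X : Set G))
    {t b : G} (ht : t ∈ X) (hb : b ∈ Q) : ⁅t, b⁆ ∈ X ⊓ Q := by
  rw [commutatorElement_def]
  refine mem_inf.mpr ⟨?_, mul_mem (Normal.conj_mem ‹_› b hb t) (inv_mem hb)⟩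
  rw [mul_assoc, mul_assoc, ← mul_assoc b]
  exact mul_mem ht ((mem_normalizer_iff.mp (hQX hb) _).mp (inv_mem ht))

theorem normalizer_le_normalizer_inf_normal (X Q : Subgroup G) [Q.Normal] :
    normalizer (X : Set G) ≤ normalizer ((X ⊓ Q : Subgroup G) : Set G) :=
  (le_inf le_rfl (le_top.trans (normalizer_eq_top Q).ge)).trans inf_normalizer_le_normalizer_inf

theorem le_normalizer_smul {Q A : Subgroup G} [hQ : Q.Normal] (hQA : Q ≤ normalizer (A : Set G))
    (g : ConjAct G) : Q ≤ normalizer ((g • A : Subgroup G) : Set G) := by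
  intro q hq
  rw [← conjAct_pointwise_smul_iff]
  have hconj : ofConjAct g⁻¹ * q * (ofConjAct g⁻¹)⁻¹ ∈ Q := hQ.conj_mem q hq _
  have hg : toConjAct q * g = g * toConjAct (ofConjAct g⁻¹ * q * (ofConjAct g⁻¹)⁻¹) := by
    simp only [map_mul, map_inv, toConjAct_ofConjAct]
    group
  rw [smul_smul, hg, mul_smul, conjAct_pointwise_smul_eq_self (hQA hconj)]

theorem finiteIndex_normalizer_of_normal (N : Subgroup G) [N.Normal] :
    (normalizer (N : Set G)).FiniteIndex := by
  rw [normalizer_eq_top]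
  infer_instance

theorem centralizer_bot_eq_top : centralizer ((⊥ : Subgroup G) : Set G) = ⊤ :=
  centralizer_eq_top_iff_subset.mpr (SetLike.coe_subset_coe.mpr bot_le)

theorem commutatorElement_mem {H : Subgroup G} {a b : G} (ha : a ∈ H) (hb : b ∈ H) :
    ⁅a, b⁆ ∈ H := by
  rw [commutatorElement_def]
  exact mul_mem (mul_mem (mul_mem ha hb) (inv_mem ha)) (inv_mem hb)

theorem conj_mem_centralizer {A : Subgroup G} {g h : G} (hg : g ∈ normalizer (A : Set G))
    (hh : h ∈ centralizer (A : Set G)) : g * h * g⁻¹ ∈ centralizer (A : Set G) := by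
  rw [mem_centralizer_iff]
  intro a ha
  have hga : g⁻¹ * a * g ∈ A := (mem_normalizer_iff''.mp hg a).mp ha
  calc a * (g * h * g⁻¹) = g * ((g⁻¹ * a * g) * h) * g⁻¹ := by group
    _ = g * (h * (g⁻¹ * a * g)) * g⁻¹ := by rw [mem_centralizer_iff.mp hh _ hga]
    _ = g * h * g⁻¹ * a := by group

theorem normalizer_le_normalizer_centralizer (A : Subgroup G) :
    normalizer (A : Set G) ≤ normalizer (centralizer (A : Set G) : Set G) := by
  refine fun g hg => mem_normalizer_iff.mpr fun h => ⟨conj_mem_centralizer hg, fun hh => ?_⟩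
  simpa [mul_assoc] using conj_mem_centralizer (inv_mem hg) hh

theorem virtSolvable_of_commute {H M : Subgroup G} (hMH : M ≤ H) (hM : M.relIndex H ≠ 0)
    (hcomm : ∀ a ∈ M, ∀ b ∈ M, Commute a b) : VirtSolvable H :=
  ⟨M, hMH, hM, Group.isSolvable_of_comm fun a b => Subtype.ext (hcomm a a.2 b b.2)⟩

theorem HypH1.eq_bot_of_commute (hH1 : HypH1 G) {H : Subgroup G}
    (hH : (normalizer (H : Set G)).FiniteIndex) (hcomm : ∀ a ∈ H, ∀ b ∈ H, Commute a b) :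
    H = ⊥ :=
  hH1 H hH (virtSolvable_of_commute le_rfl (by simp) hcomm)

theorem HypH1.eq_bot_of_inf_eq_bot (hH1 : HypH1 G) {X Q : Subgroup G} [Q.FiniteIndex]
    (hX : (normalizer (X : Set G)).FiniteIndex) (h : X ⊓ Q = ⊥) : X = ⊥ := by
  have hcard : (⊥ : Subgroup G).relIndex X ≠ 0 := by
    rw [← h, inf_relIndex_left]
    exact isFiniteRelIndex_of_finiteIndex.relIndex_ne_zero
  exact hH1 X hX (virtSolvable_of_commute bot_le hcard (by simp))

theorem HypH1.centralizer_inf_centralizer_centralizer_eq_bot (hH1 : HypH1 G) {A : Subgroup G}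
    (hA : (normalizer (A : Set G)).FiniteIndex) :
    centralizer (A : Set G) ⊓ centralizer (centralizer (A : Set G) : Set G) = ⊥ := by
  have := hA
  refine hH1.eq_bot_of_commute (finiteIndex_of_le (H := normalizer (A : Set G)) ?_) fun a ha b hb =>
    mem_centralizer_iff.mp (mem_inf.mp hb).2 a (mem_inf.mp ha).1
  exact (le_inf (normalizer_le_normalizer_centralizer A)
    ((normalizer_le_normalizer_centralizer A).trans (normalizer_le_normalizer_centralizer _))).trans
    inf_normalizer_le_normalizer_inf

theorem centralizer_eq_bot_of_normal (hH1 : HypH1 G) (hH2 : HypH2 G) {N : Subgroup G}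
    [hN : N.Normal] (hN_ne : N ≠ ⊥) : centralizer (N : Set G) = ⊥ := by
  obtain ⟨G₀, hG₀, hG₀N⟩ := hH2 N hN hN_ne
  have hCN : centralizer (N : Set G) ⊓ N = ⊥ :=
    hH1.eq_bot_of_commute (finiteIndex_normalizer_of_normal _) fun a ha b hb =>
      Commute.symm (mem_centralizer_iff.mp (mem_inf.mp ha).1 b (mem_inf.mp hb).2)
  refine hH1 _ (finiteIndex_normalizer_of_normal _)
    (virtSolvable_of_commute (M := centralizer (N : Set G) ⊓ G₀) inf_le_left ?_ fun a ha b hb => ?_)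
  · rw [inf_relIndex_left]
    exact isFiniteRelIndex_of_finiteIndex.relIndex_ne_zero
  · rw [← commutatorElement_eq_one_iff_commute, ← mem_bot, ← hCN]
    exact mem_inf.mpr ⟨commutatorElement_mem (mem_inf.mp ha).1 (mem_inf.mp hb).1,
      hG₀N (commutator_mem_commutator (mem_inf.mp ha).2 (mem_inf.mp hb).2)⟩

structure IsNormalizedFamily (Q : Subgroup G) (𝓡 : Set (Subgroup G)) : Prop where
  finite : 𝓡.Finite
  smul_mem : ∀ g : ConjAct G, ∀ R ∈ 𝓡, g • R ∈ 𝓡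
  le : ∀ R ∈ 𝓡, R ≤ Q
  le_normalizer : ∀ R ∈ 𝓡, Q ≤ normalizer (R : Set G)

def IsMeetAtom (𝓡 : Set (Subgroup G)) (P : Subgroup G) : Prop :=
  Minimal (fun D => D ∈ infClosure 𝓡 ∧ D ≠ ⊥) P

theorem isNormalizedFamily_orbit {Q A : Subgroup G} [Q.Normal] [Q.FiniteIndex] (hA : A ≤ Q)
    (hQA : Q ≤ normalizer (A : Set G)) : IsNormalizedFamily Q (orbit (ConjAct G) A) where
  finite := by
    refine Set.finite_of_ncard_ne_zero ?_
    rw [← index_stabilizer]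
    have : (Q.map ((toConjAct : G ≃* ConjAct G) : G →* ConjAct G)).FiniteIndex :=
      ⟨by rw [index_map_equiv]; exact FiniteIndex.index_ne_zero⟩
    refine (finiteIndex_of_le
      (H := Q.map ((toConjAct : G ≃* ConjAct G) : G →* ConjAct G)) ?_).index_ne_zero
    rintro _ ⟨q, hq, rfl⟩
    exact conjAct_pointwise_smul_eq_self (hQA hq)
  smul_mem g := by
    rintro _ ⟨h, rfl⟩
    exact ⟨g * h, mul_smul g h A⟩
  le := by
    rintro _ ⟨g, rfl⟩
    exact (pointwise_smul_le_pointwise_smul_iff.mpr hA).trans (Normal.conjAct ‹_› g).le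
  le_normalizer := by
    rintro _ ⟨g, rfl⟩
    exact le_normalizer_smul hQA g

theorem IsNormalizedFamily.union {Q : Subgroup G} {𝓡 𝓢 : Set (Subgroup G)}
    (h𝓡 : IsNormalizedFamily Q 𝓡) (h𝓢 : IsNormalizedFamily Q 𝓢) :
    IsNormalizedFamily Q (𝓡 ∪ 𝓢) where
  finite := h𝓡.finite.union h𝓢.finite
  smul_mem g R := Or.imp (h𝓡.smul_mem g R) (h𝓢.smul_mem g R)
  le R hR := hR.elim (h𝓡.le R) (h𝓢.le R)
  le_normalizer R hR := hR.elim (h𝓡.le_normalizer R) (h𝓢.le_normalizer R)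

section Atoms

variable {Q P D : Subgroup G} {𝓡 : Set (Subgroup G)}

theorem IsMeetAtom.mem_infClosure (hP : IsMeetAtom 𝓡 P) : P ∈ infClosure 𝓡 := hP.1.1

theorem IsMeetAtom.ne_bot (hP : IsMeetAtom 𝓡 P) : P ≠ ⊥ := hP.1.2

theorem IsMeetAtom.le_of_le (hP : IsMeetAtom 𝓡 P) (hD : D ∈ infClosure 𝓡) (hD_ne : D ≠ ⊥)
    (hDP : D ≤ P) : P ≤ D :=
  Minimal.le_of_le hP ⟨hD, hD_ne⟩ hDP

theorem IsNormalizedFamily.le_and_le_normalizer_of_mem_infClosure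
    (h𝓡 : IsNormalizedFamily Q 𝓡) (hD : D ∈ infClosure 𝓡) :
    D ≤ Q ∧ Q ≤ normalizer (D : Set G) := by
  refine infClosure_min (t := {D | D ≤ Q ∧ Q ≤ normalizer (D : Set G)})
    (fun R hR => ⟨h𝓡.le R hR, h𝓡.le_normalizer R hR⟩) ?_ hD
  exact fun D hD E hE =>
    ⟨inf_le_left.trans hD.1, (le_inf hD.2 hE.2).trans inf_normalizer_le_normalizer_inf⟩

theorem IsNormalizedFamily.smul_mem_infClosure (h𝓡 : IsNormalizedFamily Q 𝓡) (g : ConjAct G)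
    (hD : D ∈ infClosure 𝓡) : g • D ∈ infClosure 𝓡 := by
  refine infClosure_min (t := {D | g • D ∈ infClosure 𝓡})
    (fun R hR => subset_infClosure (h𝓡.smul_mem g R hR)) ?_ hD
  intro D hD E hE
  simpa only [Set.mem_ofPred_eq, smul_inf] using infClosed_infClosure hD hE

theorem IsNormalizedFamily.isMeetAtom_smul (h𝓡 : IsNormalizedFamily Q 𝓡) (g : ConjAct G)
    (hP : IsMeetAtom 𝓡 P) : IsMeetAtom 𝓡 (g • P) := by
  have smul_ne_bot (g : ConjAct G) {D : Subgroup G} (hD : D ≠ ⊥) : g • D ≠ ⊥ := fun h =>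
    hD (by simpa using congrArg (g⁻¹ • ·) h)
  refine ⟨⟨h𝓡.smul_mem_infClosure g hP.mem_infClosure, smul_ne_bot g hP.ne_bot⟩, fun D hD hDP => ?_⟩
  have hle : P ≤ g⁻¹ • D := hP.le_of_le (h𝓡.smul_mem_infClosure g⁻¹ hD.1) (smul_ne_bot g⁻¹ hD.2)
    (by simpa using (pointwise_smul_le_pointwise_smul_iff (a := g⁻¹)).mpr hDP)
  simpa using (pointwise_smul_le_pointwise_smul_iff (a := g)).mpr hle

theorem le_or_inf_eq_bot_of_isMeetAtom (hP : IsMeetAtom 𝓡 P)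
    (hD : D ∈ infClosure 𝓡) : P ≤ D ∨ P ⊓ D = ⊥ := by
  refine or_iff_not_imp_right.mpr fun hPD => ?_
  exact (le_inf_iff.mp (hP.le_of_le (infClosed_infClosure hP.mem_infClosure hD) hPD inf_le_left)).2

theorem eq_or_inf_eq_bot_of_isMeetAtom {P' : Subgroup G} (hP : IsMeetAtom 𝓡 P)
    (hP' : IsMeetAtom 𝓡 P') : P = P' ∨ P ⊓ P' = ⊥ :=
  (le_or_inf_eq_bot_of_isMeetAtom hP hP'.mem_infClosure).imp_left
    fun h => le_antisymm h (hP'.le_of_le hP.mem_infClosure hP.ne_bot h)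

theorem IsNormalizedFamily.exists_isMeetAtom (h𝓡 : IsNormalizedFamily Q 𝓡)
    (hne : ∃ R ∈ 𝓡, R ≠ ⊥) : ∃ P, IsMeetAtom 𝓡 P := by
  obtain ⟨R, hR, hR_ne⟩ := hne
  exact (h𝓡.finite.infClosure.subset fun D hD => hD.1).exists_minimal
    ⟨R, subset_infClosure hR, hR_ne⟩

theorem IsNormalizedFamily.commute_of_inf_eq_bot (h𝓡 : IsNormalizedFamily Q 𝓡)
    (hP : IsMeetAtom 𝓡 P) (hD : D ∈ infClosure 𝓡) (hPD : P ⊓ D = ⊥) {p d : G}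
    (hp : p ∈ P) (hd : d ∈ D) : Commute p d := by
  obtain ⟨hPQ, hQP⟩ := h𝓡.le_and_le_normalizer_of_mem_infClosure hP.mem_infClosure
  obtain ⟨hDQ, hQD⟩ := h𝓡.le_and_le_normalizer_of_mem_infClosure hD
  exact _root_.commute_of_inf_eq_bot (hPQ.trans hQD) (hDQ.trans hQP) hPD hp hd

theorem IsNormalizedFamily.finiteIndex_normalizer (h𝓡 : IsNormalizedFamily Q 𝓡) [Q.FiniteIndex]
    (hP : IsMeetAtom 𝓡 P) : (normalizer (P : Set G)).FiniteIndex :=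
  finiteIndex_of_le (h𝓡.le_and_le_normalizer_of_mem_infClosure hP.mem_infClosure).2

theorem IsNormalizedFamily.not_forall_commute (hH1 : HypH1 G) (h𝓡 : IsNormalizedFamily Q 𝓡)
    [Q.FiniteIndex] (hP : IsMeetAtom 𝓡 P) : ¬ ∀ a ∈ P, ∀ b ∈ P, Commute a b :=
  fun h => hP.ne_bot (hH1.eq_bot_of_commute (h𝓡.finiteIndex_normalizer hP) h)

theorem IsNormalizedFamily.le_of_commutator_le (hH1 : HypH1 G) (h𝓡 : IsNormalizedFamily Q 𝓡)
    [Q.FiniteIndex] (hP : IsMeetAtom 𝓡 P) (hD : D ∈ infClosure 𝓡) (hPD : ⁅P, P⁆ ≤ D) :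
    P ≤ D := by
  refine (le_or_inf_eq_bot_of_isMeetAtom hP hD).resolve_right fun hbot => ?_
  refine h𝓡.not_forall_commute hH1 hP fun a ha b hb => ?_
  rw [← commutatorElement_eq_one_iff_commute, ← mem_bot, ← hbot]
  exact mem_inf.mpr ⟨commutatorElement_mem ha hb, hPD (commutator_mem_commutator ha hb)⟩

theorem IsNormalizedFamily.normalClosure_le (h𝓡 : IsNormalizedFamily Q 𝓡)
    (hP : IsMeetAtom 𝓡 P) {W : Subgroup G} (hW : ∀ P', IsMeetAtom 𝓡 P' → P' ≤ W) :
    normalClosure (P : Set G) ≤ W := by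
  refine (closure_le W).mpr fun y hy => ?_
  obtain ⟨p, hp, hpy⟩ := Group.mem_conjugatesOfSet_iff.mp hy
  obtain ⟨c, rfl⟩ := isConj_iff.mp hpy
  exact hW _ (h𝓡.isMeetAtom_smul (toConjAct c) hP) (smul_mem_pointwise_smul p _ P hp)

theorem IsNormalizedFamily.eq_one_of_forall_commute (hH1 : HypH1 G) (hH2 : HypH2 G)
    (h𝓡 : IsNormalizedFamily Q 𝓡) (hne : ∃ P, IsMeetAtom 𝓡 P) {z : G}
    (hz : ∀ P, IsMeetAtom 𝓡 P → ∀ p ∈ P, Commute p z) : z = 1 := by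
  obtain ⟨B, hB⟩ := hne
  have hle : normalClosure (B : Set G) ≤ centralizer {z} := h𝓡.normalClosure_le hB
    fun P hP p hp => mem_centralizer_singleton_iff.mpr (hz P hP p hp).eq
  have hz : z ∈ centralizer (normalClosure (B : Set G) : Set G) :=
    mem_centralizer_iff.mpr fun n hn => mem_centralizer_singleton_iff.mp (hle hn)
  rwa [centralizer_eq_bot_of_normal hH1 hH2 (ne_bot_of_le_ne_bot hB.ne_bot le_normalClosure),
    mem_bot] at hz

theorem IsNormalizedFamily.exists_commutator_le (hH2 : HypH2 G) (h𝓡 : IsNormalizedFamily Q 𝓡)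
    (hne : ∃ P, IsMeetAtom 𝓡 P) {W : Subgroup G} (hW : ∀ P, IsMeetAtom 𝓡 P → P ≤ W) :
    ∃ R : Subgroup G, R.FiniteIndex ∧ ⁅R, R⁆ ≤ W := by
  obtain ⟨B, hB⟩ := hne
  obtain ⟨R, hR, hRB⟩ := hH2 _ normalClosure_normal (ne_bot_of_le_ne_bot hB.ne_bot le_normalClosure)
  exact ⟨R, hR, hRB.trans (h𝓡.normalClosure_le hB hW)⟩

theorem IsNormalizedFamily.commute_of_not_le (hH1 : HypH1 G) (h𝓡 : IsNormalizedFamily Q 𝓡)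
    [Q.Normal] [Q.FiniteIndex] {X : Subgroup G} (hQX : Q ≤ normalizer (X : Set G))
    (hXQ : X ⊓ Q ∈ 𝓡) (hP : IsMeetAtom 𝓡 P) (hPX : ¬ P ≤ X ⊓ Q) {t b : G} (ht : t ∈ X)
    (hb : b ∈ P) : Commute t b := by
  have hXQ' : X ⊓ Q ∈ infClosure 𝓡 := subset_infClosure hXQ
  have hbot : P ⊓ (X ⊓ Q) = ⊥ := (le_or_inf_eq_bot_of_isMeetAtom hP hXQ').resolve_left hPX
  have hPQ : P ≤ Q := (h𝓡.le_and_le_normalizer_of_mem_infClosure hP.mem_infClosure).1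
  have hcomm {c : G} (hc : c ∈ P) : ⁅t, c⁆ ∈ X ⊓ Q := commutatorElement_mem_inf hQX ht (hPQ hc)
  have htP := h𝓡.isMeetAtom_smul (toConjAct t) hP
  rcases eq_or_inf_eq_bot_of_isMeetAtom htP hP with heq | hdisj
  · have htb := smul_mem_pointwise_smul b (toConjAct t) P hb
    rw [heq, toConjAct_smul] at htb
    rw [← commutatorElement_eq_one_iff_commute, ← mem_bot, ← hbot]
    refine mem_inf.mpr ⟨?_, hcomm hb⟩
    rw [commutatorElement_def]
    exact mul_mem htb (inv_mem hb)
  · -- otherwise `P` would be commutative, as `c⁻¹ = (t c t⁻¹)⁻¹ ⁅t, c⁆`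
    refine absurd (fun c hc d hd => ?_) (h𝓡.not_forall_commute hH1 hP)
    have h₁ := h𝓡.commute_of_inf_eq_bot htP hP.mem_infClosure hdisj
      (smul_mem_pointwise_smul c (toConjAct t) P hc) hd
    rw [toConjAct_smul] at h₁
    have h₂ : Commute ⁅t, c⁆ d := (h𝓡.commute_of_inf_eq_bot hP hXQ' hbot hd (hcomm hc)).symm
    have hc_eq : c⁻¹ = (t * c * t⁻¹)⁻¹ * ⁅t, c⁆ := by rw [commutatorElement_def]; group
    have : Commute c⁻¹ d := hc_eq ▸ h₁.inv_left.mul_left h₂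
    simpa using this.inv_left

theorem IsNormalizedFamily.commute_of_forall_isMeetAtom (hH1 : HypH1 G) (hH2 : HypH2 G)
    (h𝓡 : IsNormalizedFamily Q 𝓡) (hne : ∃ P, IsMeetAtom 𝓡 P) {A A' : Subgroup G}
    (hAA' : ∀ P, IsMeetAtom 𝓡 P → (P ≤ A ↔ P ≤ A')) {x t : G}
    (hx : x ∈ centralizer (A : Set G)) (ht : t ∈ normalizer (A' : Set G))
    (htP : ∀ P, IsMeetAtom 𝓡 P → ¬ P ≤ A' → ∀ p ∈ P, Commute t p) : Commute x t := by
  have hxA : x ∈ normalizer (A : Set G) := centralizer_le_normalizer _ hx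
  have conj_le {g : G} {B : Subgroup G} (hg : g ∈ normalizer (B : Set G)) {P : Subgroup G}
      (hPB : P ≤ B) : toConjAct g • P ≤ B := by
    rw [← conjAct_pointwise_smul_eq_self hg]
    exact pointwise_smul_le_pointwise_smul_iff.mpr hPB
  have conj_mem {g p : G} {P : Subgroup G} (hp : p ∈ P) : g⁻¹ * p * g ∈ toConjAct g⁻¹ • P := by
    have := smul_mem_pointwise_smul p (toConjAct g⁻¹) P hp
    rwa [toConjAct_smul, inv_inv] at this
  rw [← commutatorElement_eq_one_iff_commute]
  refine h𝓡.eq_one_of_forall_commute hH1 hH2 hne fun P hP p hp => Commute.symm ?_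
  by_cases hPA : P ≤ A
  · -- `x` centralizes both `P` and `t⁻¹ P t`, which lie in `A`
    have hP' := h𝓡.isMeetAtom_smul (toConjAct t⁻¹) hP
    have hP'A : toConjAct t⁻¹ • P ≤ A := (hAA' _ hP').mpr (conj_le (inv_mem ht) ((hAA' P hP).mp hPA))
    exact commute_commutatorElement_of_commute
      (mem_centralizer_iff.mp hx p (hPA hp)).symm
      (mem_centralizer_iff.mp hx _ (hP'A (conj_mem hp))).symm
  · -- `t` centralizes both `P` and `x⁻¹ P x`, which are not contained in `A'`
    have hP' := h𝓡.isMeetAtom_smul (toConjAct x⁻¹) hP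
    have hP'A : ¬ toConjAct x⁻¹ • P ≤ A' := fun h => hPA <| by
      simpa using conj_le hxA ((hAA' _ hP').mpr h)
    rw [← commutatorElement_inv]
    exact (commute_commutatorElement_of_commute (htP P hP (mt (hAA' P hP).mpr hPA) p hp)
      (htP _ hP' hP'A _ (conj_mem hp))).inv_left

end Atoms

theorem centralizer_inf_normal_eq (hH1 : HypH1 G) (hH2 : HypH2 G) {X Q : Subgroup G} [Q.Normal]
    [Q.FiniteIndex] (hQX : Q ≤ normalizer (X : Set G)) :
    centralizer ((X ⊓ Q : Subgroup G) : Set G) = centralizer (X : Set G) := by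
  refine le_antisymm (fun x hx => ?_) (centralizer_le inf_le_left)
  by_cases hA : X ⊓ Q = ⊥
  · rw [hH1.eq_bot_of_inf_eq_bot (finiteIndex_of_le hQX) hA, centralizer_bot_eq_top]
    exact mem_top x
  have hQA := hQX.trans (normalizer_le_normalizer_inf_normal X Q)
  have h𝓡 := isNormalizedFamily_orbit inf_le_right hQA
  have hne := h𝓡.exists_isMeetAtom ⟨X ⊓ Q, mem_orbit_self _, hA⟩
  refine mem_centralizer_iff.mpr fun t ht => Commute.symm ?_
  exact h𝓡.commute_of_forall_isMeetAtom hH1 hH2 hne (fun _ _ => Iff.rfl) hx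
    (normalizer_le_normalizer_inf_normal X Q (le_normalizer ht))
    fun P hP hPX p hp => h𝓡.commute_of_not_le hH1 hQX (mem_orbit_self _) hP hPX ht hp

theorem exists_commutator_inf_centralizer_centralizer_le (hH1 : HypH1 G) (hH2 : HypH2 G)
    {A Q : Subgroup G} [Q.Normal] [Q.FiniteIndex] (hAQ : A ≤ Q) (hQA : Q ≤ normalizer (A : Set G)) :
    ∃ R : Subgroup G, R.FiniteIndex ∧
      ⁅R, R⁆ ⊓ centralizer (centralizer (A : Set G) : Set G) ≤ A := by
  have hbot := hH1.centralizer_inf_centralizer_centralizer_eq_bot (finiteIndex_of_le hQA)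
  by_cases hA : A = ⊥
  · subst hA
    rw [centralizer_bot_eq_top, top_inf_eq] at hbot
    exact ⟨⊤, inferInstance, by rw [centralizer_bot_eq_top, hbot, inf_bot_eq]⟩
  have h𝓡 := isNormalizedFamily_orbit hAQ hQA
  have hne := h𝓡.exists_isMeetAtom ⟨A, mem_orbit_self _, hA⟩
  set C := centralizer (A : Set G) ⊓ Q
  -- every meet atom lies in `A` or centralizes it
  obtain ⟨R, hR, hRW⟩ := h𝓡.exists_commutator_le hH2 hne (W := A ⊔ C) fun P hP => by
    rcases le_or_inf_eq_bot_of_isMeetAtom hP (subset_infClosure (mem_orbit_self A)) with hPA | hPA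
    · exact hPA.trans le_sup_left
    refine le_sup_of_le_right fun p hp => mem_inf.mpr ⟨mem_centralizer_iff.mpr fun a ha => ?_,
      (h𝓡.le_and_le_normalizer_of_mem_infClosure hP.mem_infClosure).1 hp⟩
    exact (h𝓡.commute_of_inf_eq_bot hP (subset_infClosure (mem_orbit_self A)) hPA hp ha).symm
  refine ⟨R, hR, fun y hy => ?_⟩
  obtain ⟨a, ha, c, hc, rfl⟩ : y ∈ (A : Set G) * C := by
    rw [← coe_mul_of_right_le_normalizer_left A C (inf_le_right.trans hQA)]
    exact hRW (mem_inf.mp hy).1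
  have hc_cc : c ∈ centralizer (centralizer (A : Set G) : Set G) := by
    simpa using mul_mem (inv_mem (le_centralizer_iff.mpr le_rfl ha)) (mem_inf.mp hy).2
  have hc1 : c ∈ centralizer (A : Set G) ⊓ centralizer (centralizer (A : Set G) : Set G) :=
    mem_inf.mpr ⟨(mem_inf.mp hc).1, hc_cc⟩
  rw [hbot, mem_bot] at hc1
  simpa [hc1] using ha

/-- Up to commutators of elements of `Q`, the double centralizer of `W` does not exceed `W`. -/
def IsAdapted (Q W : Subgroup G) : Prop :=
  Q ≤ normalizer (W : Set G) ∧ ⁅Q, Q⁆ ⊓ centralizer (centralizer (W : Set G) : Set G) ≤ W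

theorem IsAdapted.mono {Q Q' W : Subgroup G} (h : IsAdapted Q W) (hQ' : Q' ≤ Q) :
    IsAdapted Q' W :=
  ⟨hQ'.trans h.1, (inf_le_inf_right _ (commutator_mono hQ' hQ')).trans h.2⟩

theorem exists_isAdapted (hH1 : HypH1 G) (hH2 : HypH2 G) {W : Subgroup G}
    (hW : (normalizer (W : Set G)).FiniteIndex) :
    ∃ Q : Subgroup G, Q.Normal ∧ Q.FiniteIndex ∧ IsAdapted Q W := by
  set Q₀ := (normalizer (W : Set G)).normalCore
  have hQ₀ : Q₀ ≤ normalizer (W : Set G) := normalCore_le _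
  obtain ⟨R, hR, hRW⟩ := exists_commutator_inf_centralizer_centralizer_le hH1 hH2
    (inf_le_right : W ⊓ Q₀ ≤ Q₀) (hQ₀.trans (normalizer_le_normalizer_inf_normal W Q₀))
  rw [centralizer_inf_normal_eq hH1 hH2 hQ₀] at hRW
  have hQR : (R ⊓ Q₀).normalCore ≤ R ⊓ Q₀ := normalCore_le _
  refine ⟨_, normalCore_normal _, inferInstance, (hQR.trans inf_le_right).trans hQ₀, ?_⟩
  exact (inf_le_inf_right _ (commutator_mono (hQR.trans inf_le_left) (hQR.trans inf_le_left))).trans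
    (hRW.trans inf_le_left)

theorem IsNormalizedFamily.le_of_le_centralizer_centralizer (hH1 : HypH1 G)
    {Q P : Subgroup G} {𝓡 : Set (Subgroup G)} (h𝓡 : IsNormalizedFamily Q 𝓡) [Q.FiniteIndex]
    {H K : Subgroup G} (hH : IsAdapted Q H) (hK : IsAdapted Q K) (hA : H ⊓ K ⊓ Q ∈ infClosure 𝓡)
    (hP : IsMeetAtom 𝓡 P) (hPH : P ≤ centralizer (centralizer (H : Set G) : Set G))
    (hPK : P ≤ centralizer (centralizer (K : Set G) : Set G)) : P ≤ H ⊓ K ⊓ Q := by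
  have hPQ : P ≤ Q := (h𝓡.le_and_le_normalizer_of_mem_infClosure hP.mem_infClosure).1
  have hPP : ⁅P, P⁆ ≤ P := commutator_le.mpr fun a ha b hb => commutatorElement_mem ha hb
  have hPP_Q : ⁅P, P⁆ ≤ ⁅Q, Q⁆ := commutator_mono hPQ hPQ
  refine h𝓡.le_of_commutator_le hH1 hP hA (le_inf (le_inf ?_ ?_) (hPP.trans hPQ))
  · exact (le_inf hPP_Q (hPP.trans hPH)).trans hH.2
  · exact (le_inf hPP_Q (hPP.trans hPK)).trans hK.2

theorem centralizer_inf_le_of_isAdapted (hH1 : HypH1 G) (hH2 : HypH2 G)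
    {H₁ H₂ K₁ K₂ Q : Subgroup G} [Q.Normal] [Q.FiniteIndex] (hH₁ : IsAdapted Q H₁)
    (hH₂ : IsAdapted Q H₂) (hK₁ : IsAdapted Q K₁) (hK₂ : IsAdapted Q K₂)
    (hH : centralizer (H₁ : Set G) = centralizer (H₂ : Set G))
    (hK : centralizer (K₁ : Set G) = centralizer (K₂ : Set G)) :
    centralizer ((H₁ ⊓ K₁ : Subgroup G) : Set G) ≤
      centralizer ((H₂ ⊓ K₂ : Subgroup G) : Set G) := by
  have hQ₁ := (le_inf hH₁.1 hK₁.1).trans inf_normalizer_le_normalizer_inf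
  have hQ₂ := (le_inf hH₂.1 hK₂.1).trans inf_normalizer_le_normalizer_inf
  by_cases hA₂ : H₂ ⊓ K₂ ⊓ Q = ⊥
  · rw [hH1.eq_bot_of_inf_eq_bot (finiteIndex_of_le hQ₂) hA₂, centralizer_bot_eq_top]
    exact le_top
  set 𝓡 := orbit (ConjAct G) (H₁ ⊓ K₁ ⊓ Q) ∪ orbit (ConjAct G) (H₂ ⊓ K₂ ⊓ Q)
  have h𝓡 : IsNormalizedFamily Q 𝓡 :=
    (isNormalizedFamily_orbit inf_le_right (hQ₁.trans (normalizer_le_normalizer_inf_normal _ Q))).union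
      (isNormalizedFamily_orbit inf_le_right (hQ₂.trans (normalizer_le_normalizer_inf_normal _ Q)))
  have hA₁𝓡 : H₁ ⊓ K₁ ⊓ Q ∈ 𝓡 := Or.inl (mem_orbit_self _)
  have hA₂𝓡 : H₂ ⊓ K₂ ⊓ Q ∈ 𝓡 := Or.inr (mem_orbit_self _)
  have hle_cc {W : Subgroup G} : W ≤ centralizer (centralizer (W : Set G) : Set G) :=
    le_centralizer_iff.mpr le_rfl
  have hle (P : Subgroup G) (hP : IsMeetAtom 𝓡 P) : P ≤ H₁ ⊓ K₁ ⊓ Q ↔ P ≤ H₂ ⊓ K₂ ⊓ Q := by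
    refine ⟨fun h => ?_, fun h => ?_⟩
    · refine h𝓡.le_of_le_centralizer_centralizer hH1 hH₂ hK₂ (subset_infClosure hA₂𝓡) hP ?_ ?_
      · exact hH ▸ h.trans ((inf_le_left.trans inf_le_left).trans hle_cc)
      · exact hK ▸ h.trans ((inf_le_left.trans inf_le_right).trans hle_cc)
    · refine h𝓡.le_of_le_centralizer_centralizer hH1 hH₁ hK₁ (subset_infClosure hA₁𝓡) hP ?_ ?_
      · exact hH ▸ h.trans ((inf_le_left.trans inf_le_left).trans hle_cc)
      · exact hK ▸ h.trans ((inf_le_left.trans inf_le_right).trans hle_cc)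
  refine fun x hx => mem_centralizer_iff.mpr fun t ht => Commute.symm ?_
  exact h𝓡.commute_of_forall_isMeetAtom hH1 hH2 (h𝓡.exists_isMeetAtom ⟨_, hA₂𝓡, hA₂⟩) hle
    (centralizer_le inf_le_left hx) (normalizer_le_normalizer_inf_normal _ Q (le_normalizer ht))
    fun P hP hPA p hp => h𝓡.commute_of_not_le hH1 hQ₂ hA₂𝓡 hP hPA ht hp

theorem statement7 (hH1 : HypH1 G) (hH2 : HypH2 G)
    (H₁ H₂ K₁ K₂ : Subgroup G)
    (hH₁ : (Subgroup.normalizer (H₁ : Set G)).FiniteIndex) (hH₂ : (Subgroup.normalizer (H₂ : Set G)).FiniteIndex)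
    (hK₁ : (Subgroup.normalizer (K₁ : Set G)).FiniteIndex) (hK₂ : (Subgroup.normalizer (K₂ : Set G)).FiniteIndex)
    (hH : Subgroup.centralizer (H₁ : Set G) = Subgroup.centralizer (H₂ : Set G))
    (hK : Subgroup.centralizer (K₁ : Set G) = Subgroup.centralizer (K₂ : Set G)) :
    Subgroup.centralizer ((H₁ ⊓ K₁ : Subgroup G) : Set G) =
      Subgroup.centralizer ((H₂ ⊓ K₂ : Subgroup G) : Set G) := by
  obtain ⟨Q₁, _, _, hQ₁⟩ := exists_isAdapted hH1 hH2 hH₁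
  obtain ⟨Q₂, _, _, hQ₂⟩ := exists_isAdapted hH1 hH2 hH₂
  obtain ⟨Q₃, _, _, hQ₃⟩ := exists_isAdapted hH1 hH2 hK₁
  obtain ⟨Q₄, _, _, hQ₄⟩ := exists_isAdapted hH1 hH2 hK₂
  have hQ₁' := hQ₁.mono (inf_le_left.trans (inf_le_left.trans inf_le_left) : Q₁ ⊓ Q₂ ⊓ Q₃ ⊓ Q₄ ≤ Q₁)
  have hQ₂' := hQ₂.mono (inf_le_left.trans (inf_le_left.trans inf_le_right) : Q₁ ⊓ Q₂ ⊓ Q₃ ⊓ Q₄ ≤ Q₂)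
  have hQ₃' := hQ₃.mono (inf_le_left.trans inf_le_right : Q₁ ⊓ Q₂ ⊓ Q₃ ⊓ Q₄ ≤ Q₃)
  have hQ₄' := hQ₄.mono (inf_le_right : Q₁ ⊓ Q₂ ⊓ Q₃ ⊓ Q₄ ≤ Q₄)
  exact le_antisymm (centralizer_inf_le_of_isAdapted hH1 hH2 hQ₁' hQ₂' hQ₃' hQ₄' hH hK)
    (centralizer_inf_le_of_isAdapted hH1 hH2 hQ₂' hQ₁' hQ₄' hQ₃' hH.symm hK.symm)
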